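/- Let M ≥ 2, let A = (A_1,…,A_M) be a tuple of d×d real matrices, let s > 0, and let μ be a σ-invariant Borel probability measure on Σ_M satisfying the Gibbs inequality for (A,s) with some constants C > 0 and P ∈ ℝ. If μ is totally ergodic (σ^k is ergodic with respect to μ for every k ≥ 1), then μ is mixing: μ(X ∩ σ^{−n}Y) → μ(X)μ(Y) as n → ∞ for all Borel sets X, Y ⊆ Σ_M. -/

import Mathlib

open MeasureTheory Filter Topology

/-- The operator norm on square real matrices induced by the Euclidean norm. -/
noncomputable def opNorm {n : Type*} [Fintype n] [DecidableEq n]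
    (X : Matrix n n ℝ) : ℝ :=
  ‖Matrix.toEuclideanCLM (𝕜 := ℝ) X‖

/-- The spectral radius `ρ(X) = inf_{k ≥ 1} ‖X^k‖^(1/k)` (Gelfand). -/
noncomputable def specRad {n : Type*} [Fintype n] [DecidableEq n]
    (X : Matrix n n ℝ) : ℝ :=
  ⨅ k : ℕ, opNorm (X ^ (k + 1)) ^ ((1 : ℝ) / (k + 1))

/-- The product `A_{x_n} ⋯ A_{x_1}` associated to the word `x = (x_1, …, x_n)`. -/
noncomputable def wordProd {M d n : ℕ} (A : Fin M → Matrix (Fin d) (Fin d) ℝ)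
    (x : Fin n → Fin M) : Matrix (Fin d) (Fin d) ℝ :=
  (List.ofFn (fun i => A (x i))).reverse.prod

/-- The product `A_{x_n} ⋯ A_{x_1}` associated to the word `w = [x_1, …, x_n]`. -/
noncomputable def listProd {M d : ℕ} (A : Fin M → Matrix (Fin d) (Fin d) ℝ)
    (w : List (Fin M)) : Matrix (Fin d) (Fin d) ℝ :=
  ((w.map A).reverse).prod

/-- Irreducibility: no invariant subspace `U` with `0 < dim U < d`. -/
def IsIrredTuple {M d : ℕ} (A : Fin M → Matrix (Fin d) (Fin d) ℝ) : Prop :=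
  ¬ ∃ U : Submodule ℝ (Fin d → ℝ),
      (∀ i, U.map (A i).mulVecLin ≤ U) ∧ U ≠ ⊥ ∧ U ≠ ⊤

/-- The shift map on `Σ_M = {1,…,M}^ℕ`. -/
def shift {M : ℕ} : (ℕ → Fin M) → (ℕ → Fin M) := fun x n => x (n + 1)

/-- The cylinder set `[x_1 ⋯ x_n]` determined by the word `w = [x_1, …, x_n]`. -/
def cyl {M : ℕ} (w : List (Fin M)) : Set (ℕ → Fin M) :=
  {y | ∀ i : Fin w.length, y (i : ℕ) = w.get i}

/-- The Gibbs inequality for `(A, s)` with constants `C > 0`, `P ∈ ℝ`. -/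
def IsGibbs {M d : ℕ} (A : Fin M → Matrix (Fin d) (Fin d) ℝ) (s C P : ℝ)
    (μ : Measure (ℕ → Fin M)) : Prop :=
  ∀ w : List (Fin M), w ≠ [] →
    C⁻¹ * (μ (cyl w)).toReal ≤ Real.exp (-(w.length : ℝ) * P) * opNorm (listProd A w) ^ s ∧
    Real.exp (-(w.length : ℝ) * P) * opNorm (listProd A w) ^ s ≤ C * (μ (cyl w)).toReal

/-- The pressure `P(A,s) = inf_{n ≥ 1} (1/n) log Σ_{|x| = n} ‖A_{x_n} ⋯ A_{x_1}‖^s ∈ [-∞, ∞)`,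
with the convention that a term is `-∞` when the corresponding sum vanishes. -/
noncomputable def pressure {M d : ℕ} (A : Fin M → Matrix (Fin d) (Fin d) ℝ) (s : ℝ) : EReal :=
  ⨅ n : ℕ,
    if (∑ x : Fin (n + 1) → Fin M, opNorm (wordProd A x) ^ s) = 0 then (⊥ : EReal)
    else ((Real.log (∑ x : Fin (n + 1) → Fin M, opNorm (wordProd A x) ^ s) / (n + 1) : ℝ) : EReal)

open scoped ENNReal InnerProductSpace

/-!
Submultiplicativity of the norm turns the Gibbs inequality into the upper quasi-Bernoulli bound
`μ [ab] ≤ C³ μ [a] μ [b]`, and by density `μ (B ∩ σ⁻ⁿ F) ≤ C³ μ B μ F` whenever `B` depends only on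
the first `n` letters. For a tail set `A` this gives `μ (B ∩ A) ≤ C³ μ B μ A` for every `B`, so a
tail set of positive measure has measure at least `C⁻³`. A nontrivial tail algebra would therefore
contain an atom `E`; by Poincaré recurrence `μ (E ∩ σ⁻ᵐ E) > 0` for some `m ≥ 1`, hence
`E = σ⁻ᵐ E` mod `μ`, contradicting the ergodicity of `σᵐ`. So the tail algebra is trivial.

On `L²(μ)` the Koopman operator `U f = f ∘ σ` is an isometry, and the projections of `1_X` onto the
subspaces `range Uⁿ` converge to a function lying in all of them, i.e. a tail-measurable function,
which must be the constant `μ X`. Hence `μ (X ∩ σ⁻ⁿ Y) = ⟪1_X, Uⁿ 1_Y⟫ → μ X μ Y`.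
-/

section Gibbs

variable {M d : ℕ} {A : Fin M → Matrix (Fin d) (Fin d) ℝ} {s C P : ℝ} {μ : Measure (ℕ → Fin M)}

lemma opNorm_mul_le {n : Type*} [Fintype n] [DecidableEq n] (X Y : Matrix n n ℝ) :
    opNorm (X * Y) ≤ opNorm X * opNorm Y := by
  simp only [opNorm, map_mul]
  exact norm_mul_le _ _

lemma opNorm_nonneg {n : Type*} [Fintype n] [DecidableEq n] (X : Matrix n n ℝ) :
    0 ≤ opNorm X :=
  norm_nonneg _

lemma listProd_append (A : Fin M → Matrix (Fin d) (Fin d) ℝ) (a b : List (Fin M)) :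
    listProd A (a ++ b) = listProd A b * listProd A a := by
  simp [listProd]

noncomputable def gibbsWeight (A : Fin M → Matrix (Fin d) (Fin d) ℝ) (s P : ℝ)
    (w : List (Fin M)) : ℝ :=
  Real.exp (-(w.length : ℝ) * P) * opNorm (listProd A w) ^ s

lemma gibbsWeight_nonneg (w : List (Fin M)) : 0 ≤ gibbsWeight A s P w := by
  unfold gibbsWeight; exact mul_nonneg (Real.exp_pos _).le (Real.rpow_nonneg (opNorm_nonneg _) _)

lemma gibbsWeight_append_le (hs : 0 ≤ s) (a b : List (Fin M)) :
    gibbsWeight A s P (a ++ b) ≤ gibbsWeight A s P a * gibbsWeight A s P b := by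
  have hnorm : opNorm (listProd A (a ++ b)) ^ s
      ≤ opNorm (listProd A a) ^ s * opNorm (listProd A b) ^ s := by
    rw [← Real.mul_rpow (opNorm_nonneg _) (opNorm_nonneg _), mul_comm (opNorm _), listProd_append]
    exact Real.rpow_le_rpow (opNorm_nonneg _) (opNorm_mul_le _ _) hs
  have hexp : Real.exp (-((a ++ b).length : ℝ) * P)
      = Real.exp (-(a.length : ℝ) * P) * Real.exp (-(b.length : ℝ) * P) := by
    rw [← Real.exp_add, List.length_append, Nat.cast_add]; ring_nf
  calc gibbsWeight A s P (a ++ b)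
      ≤ Real.exp (-((a ++ b).length : ℝ) * P)
          * (opNorm (listProd A a) ^ s * opNorm (listProd A b) ^ s) :=
        mul_le_mul_of_nonneg_left hnorm (Real.exp_pos _).le
    _ = gibbsWeight A s P a * gibbsWeight A s P b := by
        rw [hexp, gibbsWeight, gibbsWeight]; ring

lemma IsGibbs.measureReal_cyl_append_le (hs : 0 ≤ s) (hC : 0 < C) (hG : IsGibbs A s C P μ)
    {a b : List (Fin M)} (ha : a ≠ []) (hb : b ≠ []) :
    μ.real (cyl (a ++ b)) ≤ C ^ 3 * μ.real (cyl a) * μ.real (cyl b) := by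
  have hab := (hG (a ++ b) (by simp [ha])).1
  have hwa := (hG a ha).2
  have hwb := (hG b hb).2
  calc μ.real (cyl (a ++ b)) ≤ C * gibbsWeight A s P (a ++ b) := by
        rw [← inv_mul_le_iff₀ hC]; exact hab
    _ ≤ C * ((C * μ.real (cyl a)) * (C * μ.real (cyl b))) := by
        gcongr
        exact (gibbsWeight_append_le hs a b).trans
          (mul_le_mul hwa hwb (gibbsWeight_nonneg b) ((gibbsWeight_nonneg a).trans hwa))
    _ = C ^ 3 * μ.real (cyl a) * μ.real (cyl b) := by ring

end Gibbs

section Cylinders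

variable {M : ℕ}

lemma shift_iterate_apply (k : ℕ) (y : ℕ → Fin M) (j : ℕ) :
    shift^[k] y j = y (j + k) := by
  induction k generalizing y with
  | zero => rfl
  | succ k ih => rw [Function.iterate_succ_apply, ih]; simp [shift, Nat.add_assoc]

lemma measurable_shift : Measurable (shift (M := M)) :=
  measurable_pi_lambda _ fun n => measurable_pi_apply (n + 1)

def wordPrefix (n : ℕ) (y : ℕ → Fin M) : Fin n → Fin M := fun i => y i

lemma measurable_wordPrefix (n : ℕ) : Measurable (wordPrefix (M := M) n) :=
  measurable_pi_lambda _ fun i => measurable_pi_apply (i : ℕ)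

lemma mem_cyl_iff {w : List (Fin M)} {y : ℕ → Fin M} :
    y ∈ cyl w ↔ ∀ i (h : i < w.length), y i = w[i] := by
  simp [cyl, Fin.forall_iff]

lemma cyl_ofFn {n : ℕ} (w : Fin n → Fin M) : cyl (List.ofFn w) = wordPrefix n ⁻¹' {w} := by
  ext y
  simp [mem_cyl_iff, wordPrefix, funext_iff, Fin.forall_iff]

lemma cyl_append (a b : List (Fin M)) :
    cyl (a ++ b) = cyl a ∩ shift^[a.length] ⁻¹' cyl b := by
  ext y
  simp only [Set.mem_inter_iff, Set.mem_preimage, mem_cyl_iff, shift_iterate_apply,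
    List.length_append]
  constructor
  · intro h
    refine ⟨fun i hi => ?_, fun j hj => ?_⟩
    · rw [h i (by omega), List.getElem_append_left hi]
    · rw [h (j + a.length) (by omega), List.getElem_append_right (by omega)]
      simp
  · rintro ⟨ha, hb⟩ i hi
    rcases lt_or_ge i a.length with hlt | hge
    · rw [List.getElem_append_left hlt, ha i hlt]
    · rw [List.getElem_append_right hge, ← hb (i - a.length) (by omega), Nat.sub_add_cancel hge]

lemma wordPrefix_preimage_inter_shift_preimage {n q : ℕ} (a : Fin n → Fin M) (b : Fin q → Fin M) :
    wordPrefix n ⁻¹' {a} ∩ shift^[n] ⁻¹' (wordPrefix q ⁻¹' {b})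
      = cyl (List.ofFn a ++ List.ofFn b) := by
  rw [cyl_append, cyl_ofFn, cyl_ofFn, List.length_ofFn]

lemma exists_eq_wordPrefix_preimage {F : Set (ℕ → Fin M)}
    (hF : F ∈ measurableCylinders fun _ : ℕ => Fin M) :
    ∃ q, q ≠ 0 ∧ ∃ T : Set (Fin q → Fin M), F = wordPrefix q ⁻¹' T := by
  rw [measurableCylinders_nat] at hF
  simp only [Set.mem_iUnion, Set.mem_singleton_iff] at hF
  obtain ⟨a, S, -, rfl⟩ := hF
  refine ⟨a + 1, a.succ_ne_zero, {w | (fun i : Finset.Iic a => w ⟨i, ?_⟩) ∈ S}, ?_⟩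
  · have := Finset.mem_Iic.1 i.2; omega
  · ext y; rfl

end Cylinders

section QuasiBernoulli

variable {M : ℕ}

def IsUpperQuasiBernoulli (μ : Measure (ℕ → Fin M)) (K : ℝ≥0∞) : Prop :=
  ∀ a b : List (Fin M), a ≠ [] → b ≠ [] → μ (cyl (a ++ b)) ≤ K * μ (cyl a) * μ (cyl b)

theorem IsGibbs.isUpperQuasiBernoulli {d : ℕ} {A : Fin M → Matrix (Fin d) (Fin d) ℝ}
    {s C P : ℝ} {μ : Measure (ℕ → Fin M)} [IsFiniteMeasure μ] (hs : 0 ≤ s) (hC : 0 < C)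
    (hG : IsGibbs A s C P μ) : IsUpperQuasiBernoulli μ (ENNReal.ofReal (C ^ 3)) := by
  intro a b ha hb
  rw [← ENNReal.ofReal_toReal (measure_ne_top μ (cyl a)),
    ← ENNReal.ofReal_toReal (measure_ne_top μ (cyl b)),
    ← ENNReal.ofReal_toReal (measure_ne_top μ (cyl (a ++ b))),
    ← ENNReal.ofReal_mul (by positivity), ← ENNReal.ofReal_mul (by positivity)]
  exact ENNReal.ofReal_le_ofReal (hG.measureReal_cyl_append_le hs hC ha hb)

end QuasiBernoulli

namespace MeasureTheory

lemma Measure.le_of_forall_measure_singleton_le {α : Type*} [MeasurableSpace α] [Countable α]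
    [MeasurableSingletonClass α] {μ ν : Measure α} (h : ∀ a, μ {a} ≤ ν {a}) : μ ≤ ν :=
  Measure.le_iff.2 fun s hs => by
    rw [← μ.tsum_indicator_apply_singleton s hs, ← ν.tsum_indicator_apply_singleton s hs]
    exact ENNReal.tsum_le_tsum fun a => Set.indicator_le_indicator (h a)

lemma MeasuredSets.continuous_measure_of_le {α : Type*} [MeasurableSpace α] {μ ν : Measure α}
    (h : ν ≤ μ) : Continuous fun s : MeasuredSets μ => ν s := by
  refine continuous_of_le_add_edist 1 ENNReal.one_ne_top fun s t => ?_
  rw [one_mul, ← tsub_le_iff_left]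
  exact le_measure_sdiff.trans ((measure_mono Set.subset_union_left).trans (h _))

lemma le_of_forall_mem_measurableCylinders {ι : Type*} {α : ι → Type*}
    [∀ i, MeasurableSpace (α i)] {μ : Measure (∀ i, α i)} [IsFiniteMeasure μ]
    {Φ Ψ : Set (∀ i, α i) → ℝ≥0∞} (hΦ : Continuous fun s : MeasuredSets μ => Φ s)
    (hΨ : Continuous fun s : MeasuredSets μ => Ψ s)
    (h : ∀ s ∈ measurableCylinders α, Φ s ≤ Ψ s) {s : Set (∀ i, α i)} (hs : MeasurableSet s) :
    Φ s ≤ Ψ s := by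
  have hdense := dense_of_generateFrom_isSetRing (μ := μ) isSetRing_measurableCylinders
    ⟨{Set.univ}, Set.countable_singleton _,
      Set.singleton_subset_iff.2 (univ_mem_measurableCylinders _), by simp⟩
    generateFrom_measurableCylinders.symm
  exact hdense.induction (P := fun s : MeasuredSets μ => Φ s ≤ Ψ s) (fun t ht => h t ht)
    (isClosed_le hΦ hΨ) ⟨s, hs⟩

end MeasureTheory

/-- `h` is the limit of the orthogonal projections of `x` onto the decreasing closed subspaces
`range Uⁿ`. -/
theorem LinearIsometry.exists_mem_iInf_range_pow_tendsto_inner {𝕜 E : Type*} [RCLike 𝕜]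
    [NormedAddCommGroup E] [InnerProductSpace 𝕜 E] [CompleteSpace E] (U : E →ₗᵢ[𝕜] E) (x : E) :
    ∃ h ∈ ⨅ n, LinearMap.range (U ^ n).toLinearMap,
      ∀ y, Tendsto (fun n => ⟪x - h, (U ^ n) y⟫_𝕜) atTop (𝓝 0) := by
  set R : ℕ → Submodule 𝕜 E := fun n => LinearMap.range (U ^ n).toLinearMap
  have hR : ∀ n, (R n : Set E) = Set.range (U ^ n) := fun n => LinearMap.coe_range _
  have hW : Monotone fun n => (R n)ᗮ := fun m n hmn => by
    refine Submodule.orthogonal_le fun z hz => ?_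
    rw [← SetLike.mem_coe, hR] at hz ⊢
    obtain ⟨g, rfl⟩ := hz
    refine ⟨(U ^ (n - m)) g, ?_⟩
    change (U ^ m * U ^ (n - m)) g = (U ^ n) g
    rw [← pow_add, Nat.add_sub_cancel' hmn]
  set W := (⨆ n, (R n)ᗮ).topologicalClosure
  refine ⟨x - W.starProjection x, Submodule.mem_iInf _ |>.2 fun m => ?_, fun y => ?_⟩
  · have hle : Wᗮ ≤ (R m)ᗮᗮ := Submodule.orthogonal_le
      ((le_iSup (fun n => (R n)ᗮ) m).trans (Submodule.le_topologicalClosure _))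
    have hclosed : IsClosed (R m : Set E) := by
      rw [hR]; exact (U ^ m).isometry.isClosedEmbedding.isClosed_range
    rw [Submodule.orthogonal_orthogonal_eq_closure,
      IsClosed.submodule_topologicalClosure_eq hclosed] at hle
    exact hle (W.sub_starProjection_mem_orthogonal x)
  · have hlim := Submodule.starProjection_tendsto_closure_iSup (fun n => (R n)ᗮ) hW x
    rw [tendsto_iff_norm_sub_tendsto_zero] at hlim
    refine squeeze_zero_norm (fun n => ?_) (by simpa only [zero_mul] using hlim.mul_const ‖y‖)
    have hUy : (U ^ n) y ∈ R n := by rw [← SetLike.mem_coe, hR]; exact ⟨y, rfl⟩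
    have horth : ⟪(R n)ᗮ.starProjection x, (U ^ n) y⟫_𝕜 = 0 :=
      Submodule.inner_left_of_mem_orthogonal hUy (Submodule.starProjection_apply_mem _ x)
    calc ‖⟪x - (x - W.starProjection x), (U ^ n) y⟫_𝕜‖
        = ‖⟪(R n)ᗮ.starProjection x - W.starProjection x, (U ^ n) y⟫_𝕜‖ := by
          rw [sub_sub_cancel, inner_sub_left, horth, zero_sub, norm_neg]
      _ ≤ ‖(R n)ᗮ.starProjection x - W.starProjection x‖ * ‖(U ^ n) y‖ := norm_inner_le_norm _ _
      _ = ‖(R n)ᗮ.starProjection x - W.starProjection x‖ * ‖y‖ := by rw [LinearIsometry.norm_map]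

lemma MeasureTheory.Lp.compMeasurePreservingₗᵢ_pow_apply {α E 𝕜 : Type*} [MeasurableSpace α]
    {μ : Measure α} {p : ℝ≥0∞} [Fact (1 ≤ p)] [NormedAddCommGroup E] [NormedRing 𝕜] [Module 𝕜 E]
    [IsBoundedSMul 𝕜 E] {f : α → α} (hf : MeasurePreserving f μ μ) (n : ℕ) (g : Lp E p μ) :
    (compMeasurePreservingₗᵢ 𝕜 f hf ^ n) g = compMeasurePreserving f^[n] (hf.iterate n) g := by
  rw [LinearIsometry.coe_pow]
  change (⇑(compMeasurePreserving f hf))^[n] g = _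
  rw [compMeasurePreserving_iterate]

section Tail

variable {M : ℕ} {μ : Measure (ℕ → Fin M)}

/-- `A` belongs, up to `μ`-null sets, to the tail σ-algebra `⋂ₙ σ⁻ⁿ 𝓑`. -/
def IsAETailSet (μ : Measure (ℕ → Fin M)) (A : Set (ℕ → Fin M)) : Prop :=
  MeasurableSet A ∧ ∀ n, ∃ F, MeasurableSet F ∧ A =ᵐ[μ] shift^[n] ⁻¹' F

namespace IsAETailSet

variable {A A' : Set (ℕ → Fin M)}

lemma inter (hA : IsAETailSet μ A) (hA' : IsAETailSet μ A') : IsAETailSet μ (A ∩ A') := by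
  refine ⟨hA.1.inter hA'.1, fun n => ?_⟩
  obtain ⟨F, hF, hAF⟩ := hA.2 n
  obtain ⟨F', hF', hAF'⟩ := hA'.2 n
  exact ⟨F ∩ F', hF.inter hF', hAF.inter hAF'⟩

lemma compl (hA : IsAETailSet μ A) : IsAETailSet μ Aᶜ := by
  refine ⟨hA.1.compl, fun n => ?_⟩
  obtain ⟨F, hF, hAF⟩ := hA.2 n
  exact ⟨Fᶜ, hF.compl, hAF.compl⟩

lemma diff (hA : IsAETailSet μ A) (hA' : IsAETailSet μ A') : IsAETailSet μ (A \ A') :=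
  hA.inter hA'.compl

lemma preimage_shift_iterate (hinv : MeasurePreserving shift μ μ) (hA : IsAETailSet μ A)
    (k : ℕ) : IsAETailSet μ (shift^[k] ⁻¹' A) := by
  refine ⟨measurable_shift.iterate k hA.1, fun n => ?_⟩
  obtain ⟨F, hF, hAF⟩ := hA.2 n
  refine ⟨shift^[k] ⁻¹' F, measurable_shift.iterate k hF, ?_⟩
  rw [← Set.preimage_comp, ← Function.iterate_add, add_comm, Function.iterate_add,
    Set.preimage_comp]
  exact (hinv.iterate k).quasiMeasurePreserving.preimage_ae_eq hAF

end IsAETailSet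

end Tail

namespace IsUpperQuasiBernoulli

variable {M : ℕ} {μ : Measure (ℕ → Fin M)} {K : ℝ≥0∞} [IsFiniteMeasure μ] {A : Set (ℕ → Fin M)}

theorem measure_wordPrefix_inter_shift_wordPrefix_le (hμ : IsUpperQuasiBernoulli μ K)
    {n q : ℕ} (hn : n ≠ 0) (hq : q ≠ 0) (S : Set (Fin n → Fin M)) (T : Set (Fin q → Fin M)) :
    μ (wordPrefix n ⁻¹' S ∩ shift^[n] ⁻¹' (wordPrefix q ⁻¹' T))
      ≤ K * μ (wordPrefix n ⁻¹' S) * μ (wordPrefix q ⁻¹' T) := by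
  set f : (ℕ → Fin M) → (Fin n → Fin M) × (Fin q → Fin M) :=
    fun y => (wordPrefix n y, wordPrefix q (shift^[n] y))
  have hf : Measurable f := (measurable_wordPrefix n).prodMk
    ((measurable_wordPrefix q).comp (measurable_shift.iterate n))
  have hpre : ∀ (S : Set (Fin n → Fin M)) (T : Set (Fin q → Fin M)),
      f ⁻¹' (S ×ˢ T) = wordPrefix n ⁻¹' S ∩ shift^[n] ⁻¹' (wordPrefix q ⁻¹' T) :=
    fun _ _ => rfl
  have hle : μ.map f ≤ K • (μ.map (wordPrefix n)).prod (μ.map (wordPrefix q)) := by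
    refine Measure.le_of_forall_measure_singleton_le fun ⟨a, b⟩ => ?_
    rw [← Set.singleton_prod_singleton, Measure.map_apply hf .of_discrete, hpre,
      wordPrefix_preimage_inter_shift_preimage, Measure.smul_apply, Measure.prod_prod,
      Measure.map_apply (measurable_wordPrefix n) .of_discrete,
      Measure.map_apply (measurable_wordPrefix q) .of_discrete, ← cyl_ofFn, ← cyl_ofFn,
      smul_eq_mul, ← mul_assoc]
    exact hμ _ _ (by simpa using hn) (by simpa using hq)
  calc μ (wordPrefix n ⁻¹' S ∩ shift^[n] ⁻¹' (wordPrefix q ⁻¹' T))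
      = μ.map f (S ×ˢ T) := by rw [Measure.map_apply hf .of_discrete, hpre]
    _ ≤ (K • (μ.map (wordPrefix n)).prod (μ.map (wordPrefix q))) (S ×ˢ T) := hle _
    _ = K * μ (wordPrefix n ⁻¹' S) * μ (wordPrefix q ⁻¹' T) := by
      rw [Measure.smul_apply, Measure.prod_prod,
        Measure.map_apply (measurable_wordPrefix n) .of_discrete,
        Measure.map_apply (measurable_wordPrefix q) .of_discrete, smul_eq_mul, mul_assoc]

theorem measure_wordPrefix_inter_shift_le (hμ : IsUpperQuasiBernoulli μ K)
    (hK : K ≠ ∞) (hinv : MeasurePreserving shift μ μ) {n : ℕ} (hn : n ≠ 0)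
    (S : Set (Fin n → Fin M)) {F : Set (ℕ → Fin M)} (hF : MeasurableSet F) :
    μ (wordPrefix n ⁻¹' S ∩ shift^[n] ⁻¹' F) ≤ K * μ (wordPrefix n ⁻¹' S) * μ F := by
  set B := wordPrefix n ⁻¹' S
  have hσ : Measurable (shift (M := M))^[n] := measurable_shift.iterate n
  have hνμ : (μ.restrict B).map shift^[n] ≤ μ :=
    (Measure.map_mono Measure.restrict_le_self hσ).trans (hinv.iterate n).map_eq.le
  refine le_of_forall_mem_measurableCylinders (Φ := fun F => μ (B ∩ shift^[n] ⁻¹' F))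
    (Ψ := fun F => K * μ B * μ F)
    ((MeasuredSets.continuous_measure_of_le hνμ).congr fun F => ?_)
    ((ENNReal.continuous_const_mul (ENNReal.mul_ne_top hK (measure_ne_top μ B))).comp
      MeasuredSets.continuous_measure) (fun F hF => ?_) hF
  · have hFm : MeasurableSet (F : Set (ℕ → Fin M)) := F.2
    rw [Measure.map_apply hσ hFm, Measure.restrict_apply (hσ hFm), Set.inter_comm]
  · obtain ⟨q, hq, T, rfl⟩ := exists_eq_wordPrefix_preimage hF
    exact hμ.measure_wordPrefix_inter_shift_wordPrefix_le hn hq S T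


theorem measure_inter_le_of_isAETailSet (hμ : IsUpperQuasiBernoulli μ K) (hK : K ≠ ∞)
    (hinv : MeasurePreserving shift μ μ) (hA : IsAETailSet μ A) {B : Set (ℕ → Fin M)}
    (hB : MeasurableSet B) : μ (B ∩ A) ≤ K * μ B * μ A := by
  refine le_of_forall_mem_measurableCylinders (Φ := fun B => μ (B ∩ A))
    (Ψ := fun B => K * μ B * μ A)
    ((MeasuredSets.continuous_measure_of_le Measure.restrict_le_self).congr fun B =>
      Measure.restrict_apply B.2)
    ((ENNReal.continuous_mul_const (measure_ne_top μ A)).comp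
      ((ENNReal.continuous_const_mul hK).comp MeasuredSets.continuous_measure))
    (fun B hB => ?_) hB
  obtain ⟨n, hn, S, rfl⟩ := exists_eq_wordPrefix_preimage hB
  obtain ⟨F, hF, hAF⟩ := hA.2 n
  calc μ (wordPrefix n ⁻¹' S ∩ A) = μ (wordPrefix n ⁻¹' S ∩ shift^[n] ⁻¹' F) :=
        measure_congr (EventuallyEq.rfl.inter hAF)
    _ ≤ K * μ (wordPrefix n ⁻¹' S) * μ F := hμ.measure_wordPrefix_inter_shift_le hK hinv hn S hF
    _ = K * μ (wordPrefix n ⁻¹' S) * μ A := by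
        rw [measure_congr hAF, (hinv.iterate n).measure_preimage hF.nullMeasurableSet]

theorem inv_le_measure_of_isAETailSet (hμ : IsUpperQuasiBernoulli μ K) (hK : K ≠ ∞)
    (hinv : MeasurePreserving shift μ μ) (hA : IsAETailSet μ A) (h0 : μ A ≠ 0) :
    K⁻¹ ≤ μ A := by
  have h := hμ.measure_inter_le_of_isAETailSet hK hinv hA hA.1
  rw [Set.inter_self] at h
  rw [ENNReal.inv_le_iff_le_mul (fun h => absurd h (measure_ne_top μ A)) (fun _ => h0),
    ← ENNReal.mul_le_mul_iff_left h0 (measure_ne_top μ A), one_mul]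
  exact h


/-- Any nontrivial tail set `E` with `μ E < 2ι`, where `ι ≥ K⁻¹ > 0` is the infimum of the measures
of nontrivial tail sets, is an atom: a proper splitting would give two pieces of measure `≥ ι`. -/
theorem exists_isAETailSet_atom (hμ : IsUpperQuasiBernoulli μ K) (hK : K ≠ ∞)
    (hinv : MeasurePreserving shift μ μ) (hA : IsAETailSet μ A) (h0 : μ A ≠ 0)
    (h1 : μ Aᶜ ≠ 0) :
    ∃ E, IsAETailSet μ E ∧ μ E ≠ 0 ∧ μ Eᶜ ≠ 0 ∧
      ∀ G, IsAETailSet μ G → G ⊆ E → μ G = 0 ∨ μ G = μ E := by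
  set ι := ⨅ (E) (_ : IsAETailSet μ E ∧ μ E ≠ 0 ∧ μ Eᶜ ≠ 0), μ E
  have hι0 : ι ≠ 0 := by
    refine (lt_of_lt_of_le (ENNReal.inv_pos.2 hK) (le_iInf₂ fun E hE => ?_)).ne'
    exact hμ.inv_le_measure_of_isAETailSet hK hinv hE.1 hE.2.1
  have hιtop : ι ≠ ∞ := ne_top_of_le_ne_top (measure_ne_top μ A) (iInf₂_le A ⟨hA, h0, h1⟩)
  obtain ⟨E, hEι⟩ := iInf_lt_iff.1 (ENNReal.lt_add_right hιtop hι0)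
  obtain ⟨hE, hEι⟩ := iInf_lt_iff.1 hEι
  refine ⟨E, hE.1, hE.2.1, hE.2.2, fun G hG hGE => ?_⟩
  by_contra! hG0
  have hsplit : μ G + μ (E \ G) = μ E := by
    rw [← measure_inter_add_sdiff₀ E hG.1.nullMeasurableSet, Set.inter_eq_right.2 hGE]
  have hdiff0 : μ (E \ G) ≠ 0 := fun h => hG0.2 (by rw [← hsplit, h, add_zero])
  have hcompl : ∀ H ⊆ E, μ Hᶜ ≠ 0 := fun H hH h =>
    hE.2.2 (measure_mono_null (Set.compl_subset_compl.2 hH) h)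
  have := add_le_add (iInf₂_le G ⟨hG, hG0.1, hcompl G hGE⟩ : ι ≤ μ G)
    (iInf₂_le (E \ G) ⟨hE.1.diff hG, hdiff0, hcompl _ Set.sdiff_subset⟩ : ι ≤ μ (E \ G))
  rw [hsplit] at this
  exact this.not_gt hEι

theorem measure_eq_zero_or_compl_of_isAETailSet (hμ : IsUpperQuasiBernoulli μ K) (hK : K ≠ ∞)
    (hinv : MeasurePreserving shift μ μ) (herg : ∀ k : ℕ, 1 ≤ k → Ergodic shift^[k] μ)
    (hA : IsAETailSet μ A) : μ A = 0 ∨ μ Aᶜ = 0 := by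
  by_contra! h
  obtain ⟨E, hE, h0, h1, hatom⟩ := hμ.exists_isAETailSet_atom hK hinv hA h.1 h.2
  obtain ⟨m, hm, hret⟩ := hinv.conservative.exists_gt_measure_inter_ne_zero
    hE.1.nullMeasurableSet h0 0
  have hσE : μ (shift^[m] ⁻¹' E) = μ E := (hinv.iterate m).measure_preimage hE.1.nullMeasurableSet
  have hfull : μ (E ∩ shift^[m] ⁻¹' E) = μ E :=
    (hatom _ (hE.inter (hE.preimage_shift_iterate hinv m)) Set.inter_subset_left).resolve_left hret
  have hsub : E ≤ᵐ[μ] shift^[m] ⁻¹' E :=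
    (ae_eq_of_subset_of_measure_ge Set.inter_subset_left hfull.ge
      (hE.1.inter (measurable_shift.iterate m hE.1)).nullMeasurableSet
      (measure_ne_top μ E)).symm.le.trans (Eventually.of_forall Set.inter_subset_right)
  have hEinv : shift^[m] ⁻¹' E =ᵐ[μ] E :=
    (ae_eq_of_ae_subset_of_measure_ge hsub hσE.le hE.1.nullMeasurableSet
      (measure_ne_top μ _)).symm
  rcases (herg m hm).quasiErgodic.ae_empty_or_univ₀ hE.1.nullMeasurableSet hEinv with hE' | hE'
  · exact h0 (ae_eq_empty.1 hE')
  · exact h1 (ae_eq_univ.1 hE')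


theorem ae_eq_const_of_mem_iInf_range (hμ : IsUpperQuasiBernoulli μ K) (hK : K ≠ ∞)
    (hinv : MeasurePreserving shift μ μ) (herg : ∀ k : ℕ, 1 ≤ k → Ergodic shift^[k] μ)
    {h : Lp ℝ 2 μ}
    (hh : h ∈ ⨅ n, LinearMap.range (Lp.compMeasurePreservingₗᵢ ℝ shift hinv ^ n).toLinearMap) :
    ∃ c : ℝ, h =ᵐ[μ] fun _ => c := by
  have hrep : ∀ n, ∃ g : Lp ℝ 2 μ, h =ᵐ[μ] g ∘ shift^[n] := fun n => by
    obtain ⟨g, hg⟩ := (Submodule.mem_iInf _).1 hh n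
    refine ⟨g, ?_⟩
    rw [← hg, LinearIsometry.coe_toLinearMap, Lp.compMeasurePreservingₗᵢ_pow_apply]
    exact Lp.coeFn_compMeasurePreserving g _
  refine exists_eventuallyEq_const_of_forall_separating MeasurableSet fun U hU => ?_
  have hA : IsAETailSet μ (h ⁻¹' U) := by
    refine ⟨(Lp.stronglyMeasurable h).measurable hU, fun n => ?_⟩
    obtain ⟨g, hg⟩ := hrep n
    exact ⟨g ⁻¹' U, (Lp.stronglyMeasurable g).measurable hU, hg.preimage U⟩
  rcases hμ.measure_eq_zero_or_compl_of_isAETailSet hK hinv herg hA with h0 | h1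
  · exact Or.inr (measure_eq_zero_iff_ae_notMem.1 h0)
  · exact Or.inl (mem_ae_iff.2 h1)

theorem exists_tendsto_measureReal_inter_preimage (hμ : IsUpperQuasiBernoulli μ K) (hK : K ≠ ∞)
    (hinv : MeasurePreserving shift μ μ) (herg : ∀ k : ℕ, 1 ≤ k → Ergodic shift^[k] μ)
    {X : Set (ℕ → Fin M)} (hX : MeasurableSet X) :
    ∃ c : ℝ, ∀ Y, MeasurableSet Y →
      Tendsto (fun n => μ.real (X ∩ shift^[n] ⁻¹' Y)) atTop (𝓝 (c * μ.real Y)) := by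
  set U : Lp ℝ 2 μ →ₗᵢ[ℝ] Lp ℝ 2 μ := Lp.compMeasurePreservingₗᵢ ℝ shift hinv
  obtain ⟨h, hh, hlim⟩ := U.exists_mem_iInf_range_pow_tendsto_inner
    (indicatorConstLp 2 hX (measure_ne_top μ X) (1 : ℝ))
  obtain ⟨c, hc⟩ := hμ.ae_eq_const_of_mem_iInf_range hK hinv herg hh
  refine ⟨c, fun Y hY => ?_⟩
  have key : ∀ n, ⟪indicatorConstLp 2 hX (measure_ne_top μ X) (1 : ℝ) - h,
      (U ^ n) (indicatorConstLp 2 hY (measure_ne_top μ Y) 1)⟫_ℝ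
        = μ.real (X ∩ shift^[n] ⁻¹' Y) - c * μ.real Y := fun n => by
    have hσY := hY.preimage (measurable_shift.iterate n)
    rw [Lp.compMeasurePreservingₗᵢ_pow_apply, Lp.indicatorConstLp_compMeasurePreserving,
      inner_sub_left, real_inner_comm, L2.inner_indicatorConstLp_one, real_inner_comm,
      L2.inner_indicatorConstLp_one, setIntegral_indicatorConstLp hσY,
      setIntegral_congr_ae hσY (hc.mono fun _ hx _ => hx), setIntegral_const,
      (hinv.iterate n).measureReal_preimage hY.nullMeasurableSet, smul_eq_mul, smul_eq_mul,
      mul_one, mul_comm c]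
  simpa [key] using (hlim (indicatorConstLp 2 hY (measure_ne_top μ Y) 1)).add_const (c * μ.real Y)

end IsUpperQuasiBernoulli

theorem stmt_5_general {M d : ℕ}
    (A : Fin M → Matrix (Fin d) (Fin d) ℝ) (s : ℝ) (hs : 0 < s)
    (μ : Measure (ℕ → Fin M)) [IsProbabilityMeasure μ]
    (hinv : MeasurePreserving (shift (M := M)) μ μ)
    (C P : ℝ) (hC : 0 < C) (hG : IsGibbs A s C P μ)
    (herg : ∀ k : ℕ, 1 ≤ k → Ergodic ((shift (M := M))^[k]) μ) :
    ∀ X Y : Set (ℕ → Fin M), MeasurableSet X → MeasurableSet Y →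
      Filter.Tendsto (fun n : ℕ => μ (X ∩ shift^[n] ⁻¹' Y)) Filter.atTop (nhds (μ X * μ Y)) := by
  intro X Y hX hY
  obtain ⟨c, hc⟩ := (hG.isUpperQuasiBernoulli hs.le hC).exists_tendsto_measureReal_inter_preimage
    ENNReal.ofReal_ne_top hinv herg hX
  have hcX : c = μ.real X := by
    have hX' := hc Set.univ .univ
    simp only [Set.preimage_univ, Set.inter_univ, probReal_univ, mul_one] at hX'
    exact tendsto_nhds_unique hX' tendsto_const_nhds
  rw [← ENNReal.tendsto_toReal_iff (fun n => measure_ne_top μ _)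
    (ENNReal.mul_ne_top (measure_ne_top μ X) (measure_ne_top μ Y)), ENNReal.toReal_mul]
  simpa only [hcX, measureReal_def] using hc Y hY

/-- a totally ergodic Gibbs measure is mixing. -/
theorem stmt_5 {M d : ℕ} (hM : 2 ≤ M)
    (A : Fin M → Matrix (Fin d) (Fin d) ℝ) (s : ℝ) (hs : 0 < s)
    (μ : Measure (ℕ → Fin M)) [IsProbabilityMeasure μ]
    (hinv : MeasurePreserving (shift (M := M)) μ μ)
    (C P : ℝ) (hC : 0 < C) (hG : IsGibbs A s C P μ)
    (herg : ∀ k : ℕ, 1 ≤ k → Ergodic ((shift (M := M))^[k]) μ) :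
    ∀ X Y : Set (ℕ → Fin M), MeasurableSet X → MeasurableSet Y →
      Filter.Tendsto (fun n : ℕ => μ (X ∩ shift^[n] ⁻¹' Y)) Filter.atTop (nhds (μ X * μ Y)) :=
  stmt_5_general A s hs μ hinv C P hC hG herg
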